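/- Let $\mathcal{B}$ be a $\mathbf{k}$-bialgebra with $\mathcal{B}_+ = \ker \epsilon$, and for $N \geq -1$ define $\mathcal{B}_N^\vee = \{ f \in \mathcal{B}^\vee : f(\mathcal{B}_+^{N+1}) = 0 \}$, where $\mathcal{B}_+^{N+1}$ is the $(N+1)$-st power of the ideal $\mathcal{B}_+$ (and $\mathcal{B}_+^0 = \mathcal{B}$). Then for any $p, q \geq -1$, the convolution product satisfies $\mathcal{B}_p^\vee \circledast \mathcal{B}_q^\vee \subseteq \mathcal{B}_{p+q}^\vee$ (with $\mathcal{B}_{-2}^\vee = 0$); consequently, $\mathcal{B}_\infty^\vee = \bigcup_{N \geq -1} \mathcal{B}_N^\vee$ is a subalgebra of the convolution algebra $\mathcal{B}^\vee$. -/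

import Mathlib

open TensorProduct

variable (k : Type*) [CommRing k] (B : Type*) [Ring B] [Bialgebra k B]

/-- The convolution product on the dual `B^∨ = Hom_k(B, k)` of a `k`-bialgebra:
`f ⊛ g = μ_k ∘ (f ⊗ g) ∘ Δ`. -/
noncomputable def conv (f g : B →ₗ[k] k) : B →ₗ[k] k :=
  LinearMap.mul' k k ∘ₗ TensorProduct.map f g ∘ₗ Coalgebra.comul

/-- The powers `B₊^N` of the augmentation ideal `B₊ = ker ε`, with `B₊^0 = B`. -/
noncomputable def plusPow : ℕ → Submodule k B
  | 0 => ⊤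
  | n + 1 => plusPow n * LinearMap.ker (Coalgebra.counit (R := k) (A := B))

/-- `f` belongs to the filtration piece `B_N^∨`, i.e. `f` annihilates `B₊^{N+1}`
(with `B_N^∨ = 0` for `N ≤ -2`). -/
def InDualFil (N : ℤ) (f : B →ₗ[k] k) : Prop :=
  if N ≤ -2 then f = 0 else ∀ x ∈ plusPow k B (N + 1).toNat, f x = 0

/-- `f` belongs to `B_∞^∨ = ⋃_{N ≥ -1} B_N^∨`. -/
def InDualInfty (f : B →ₗ[k] k) : Prop :=
  ∃ N : ℤ, -1 ≤ N ∧ InDualFil k B N f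

local notation "I" => LinearMap.ker (Coalgebra.counit (R := k) (A := B))

lemma mul_I_le : (⊤ : Submodule k B) * I ≤ I := by
  rw [Submodule.mul_le]
  intro m _ n hn
  simp [LinearMap.mem_ker, Bialgebra.counit_mul, LinearMap.mem_ker.1 hn]

lemma I_mul_top : (I : Submodule k B) * ⊤ ≤ I := by
  rw [Submodule.mul_le]
  intro m hm n _
  simp [LinearMap.mem_ker, Bialgebra.counit_mul, LinearMap.mem_ker.1 hm]

lemma plusPow_mul_top (n : ℕ) : plusPow k B n * ⊤ ≤ plusPow k B n := by
  induction n with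
  | zero => simp [plusPow]
  | succ n ih =>
      show plusPow k B n * I * ⊤ ≤ plusPow k B n * I
      rw [mul_assoc]
      exact le_trans (mul_le_mul' le_rfl (by
        rw [Submodule.mul_le]; intro m hm p _
        exact I_mul_top k B (Submodule.mul_mem_mul hm Submodule.mem_top)))
        le_rfl

lemma plusPow_mul (m n : ℕ) : plusPow k B m * plusPow k B n ≤ plusPow k B (m + n) := by
  induction n with
  | zero =>
      simpa [plusPow] using plusPow_mul_top k B m
  | succ n ih =>
      show plusPow k B m * (plusPow k B n * I) ≤ plusPow k B (m + n) * I
      rw [← mul_assoc]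
      exact mul_le_mul' ih le_rfl

lemma plusPow_antitone : ∀ {m n : ℕ}, m ≤ n → plusPow k B n ≤ plusPow k B m := by
  have step : ∀ n, plusPow k B (n + 1) ≤ plusPow k B n := by
    intro n
    show plusPow k B n * I ≤ plusPow k B n
    exact le_trans (mul_le_mul' le_rfl le_top) (plusPow_mul_top k B n)
  intro m n h
  induction h with
  | refl => exact le_rfl
  | step h ih => exact le_trans (step _) ih

lemma plusPow_one : plusPow k B 1 = I := by
  refine le_antisymm ?_ ?_
  · show (⊤ : Submodule k B) * I ≤ I
    exact mul_I_le k B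
  · intro x hx
    have : (1 : B) * x ∈ (⊤ : Submodule k B) * I :=
      Submodule.mul_mem_mul Submodule.mem_top hx
    exact (by simpa using this : x ∈ (⊤ : Submodule k B) * I)

/-- `T p q` is the image of `p ⊗ q` inside `B ⊗ B`. -/
noncomputable def T (p q : Submodule k B) : Submodule k (B ⊗[k] B) :=
  Submodule.map₂ (TensorProduct.mk k B B) p q

lemma T_mul_T (p q p' q' : Submodule k B) :
    T k B p q * T k B p' q' ≤ T k B (p * p') (q * q') := by
  rw [show T k B p q = Submodule.span k (Set.image2 (fun m n => (TensorProduct.mk k B B) m n) p q) from Submodule.map₂_eq_span_image2 _ p q,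
    show T k B p' q' = Submodule.span k (Set.image2 (fun m n => (TensorProduct.mk k B B) m n) p' q') from Submodule.map₂_eq_span_image2 _ p' q',
    Submodule.span_mul_span, Submodule.span_le]
  rintro z ⟨x, hx, y, hy, rfl⟩
  obtain ⟨a, ha, b, hb, rfl⟩ := hx
  obtain ⟨c, hc, d, hd, rfl⟩ := hy
  have : ((TensorProduct.mk k B B) a b) * ((TensorProduct.mk k B B) c d)
      = (a * c) ⊗ₜ[k] (b * d) := Algebra.TensorProduct.tmul_mul_tmul a c b d
  show ((TensorProduct.mk k B B) a b) * ((TensorProduct.mk k B B) c d) ∈ T k B (p * p') (q * q')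
  rw [this]
  exact Submodule.apply_mem_map₂ _ (Submodule.mul_mem_mul ha hc)
    (Submodule.mul_mem_mul hb hd)

/-- The degree-`n` piece `∑_{i+j=n} B₊^i ⊗ B₊^j`. -/
noncomputable def G (n : ℕ) : Submodule k (B ⊗[k] B) :=
  ⨆ (i : ℕ) (_ : i ≤ n), T k B (plusPow k B i) (plusPow k B (n - i))

lemma T_le_G {a b m : ℕ} (h : m ≤ a + b) :
    T k B (plusPow k B a) (plusPow k B b) ≤ G k B m := by
  refine le_trans ?_ (le_iSup₂ (f := fun i (_ : i ≤ m) =>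
    T k B (plusPow k B i) (plusPow k B (m - i))) (min a m) (min_le_right a m))
  exact Submodule.map₂_le_map₂ (plusPow_antitone k B (min_le_left a m))
    (plusPow_antitone k B (by omega))

lemma mapPi_mem (z : B ⊗[k] B) :
    TensorProduct.map
      (LinearMap.id - Algebra.linearMap k B ∘ₗ Coalgebra.counit)
      (LinearMap.id - Algebra.linearMap k B ∘ₗ Coalgebra.counit) z ∈ T k B I I := by
  have hπ : ∀ x : B, x - algebraMap k B (Coalgebra.counit (R := k) x) ∈ I := by
    intro x
    simp [LinearMap.mem_ker, Bialgebra.counit_algebraMap]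
  induction z with
  | zero => simp
  | tmul x y =>
      simp only [TensorProduct.map_tmul, LinearMap.sub_apply, LinearMap.id_apply,
        LinearMap.comp_apply, Algebra.linearMap_apply]
      exact Submodule.apply_mem_map₂ _ (hπ x) (hπ y)
  | add u v hu hv => rw [map_add]; exact add_mem hu hv

lemma comul_sub_mem (b : B) (hb : b ∈ (I : Submodule k B)) :
    Coalgebra.comul (R := k) b - b ⊗ₜ[k] (1 : B) - (1 : B) ⊗ₜ[k] b ∈ T k B I I := by
  have hb0 : Coalgebra.counit (R := k) b = 0 := LinearMap.mem_ker.1 hb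
  set u := Algebra.linearMap k B with hu
  set ε := Coalgebra.counit (R := k) (A := B) with hε
  have key : TensorProduct.map (LinearMap.id - u ∘ₗ ε) (LinearMap.id - u ∘ₗ ε)
      (Coalgebra.comul (R := k) b)
      = Coalgebra.comul (R := k) b - b ⊗ₜ[k] (1 : B) - (1 : B) ⊗ₜ[k] b := by
    have expand : TensorProduct.map (LinearMap.id - u ∘ₗ ε) (LinearMap.id - u ∘ₗ ε)
        = TensorProduct.map LinearMap.id LinearMap.id
          - TensorProduct.map (u ∘ₗ ε) LinearMap.id
          - TensorProduct.map LinearMap.id (u ∘ₗ ε)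
          + TensorProduct.map (u ∘ₗ ε) (u ∘ₗ ε) := by
      apply TensorProduct.ext'
      intro x y
      simp only [TensorProduct.map_tmul, LinearMap.sub_apply, LinearMap.add_apply,
        LinearMap.id_apply, LinearMap.comp_apply]
      simp only [TensorProduct.sub_tmul, TensorProduct.tmul_sub]
      abel
    rw [expand]
    have h1 : TensorProduct.map (u ∘ₗ ε) LinearMap.id (Coalgebra.comul (R := k) b)
        = (1 : B) ⊗ₜ[k] b := by
      have : TensorProduct.map (u ∘ₗ ε) (LinearMap.id : B →ₗ[k] B)
          = (u.rTensor B) ∘ₗ (ε.rTensor B) := by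
        rw [← LinearMap.rTensor_comp]; rfl
      rw [this, LinearMap.comp_apply, hε, Coalgebra.rTensor_counit_comul,
        LinearMap.rTensor_tmul]
      simp [hu]
    have h2 : TensorProduct.map LinearMap.id (u ∘ₗ ε) (Coalgebra.comul (R := k) b)
        = b ⊗ₜ[k] (1 : B) := by
      have : TensorProduct.map (LinearMap.id : B →ₗ[k] B) (u ∘ₗ ε)
          = (u.lTensor B) ∘ₗ (ε.lTensor B) := by
        rw [← LinearMap.lTensor_comp]; rfl
      rw [this, LinearMap.comp_apply, hε, Coalgebra.lTensor_counit_comul,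
        LinearMap.lTensor_tmul]
      simp [hu]
    have h3 : TensorProduct.map (u ∘ₗ ε) (u ∘ₗ ε) (Coalgebra.comul (R := k) b) = 0 := by
      have : TensorProduct.map (u ∘ₗ ε) (u ∘ₗ ε)
          = TensorProduct.map (u ∘ₗ ε) LinearMap.id ∘ₗ TensorProduct.map LinearMap.id (u ∘ₗ ε) := by
        rw [← TensorProduct.map_comp]; simp
      rw [this, LinearMap.comp_apply, h2, TensorProduct.map_tmul]
      simp [hu, hε, hb0, show Coalgebra.counit (R := k) b = 0 from hb0]
    simp only [LinearMap.sub_apply, LinearMap.add_apply, h1, h2, h3]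
    have : TensorProduct.map (LinearMap.id : B →ₗ[k] B) (LinearMap.id : B →ₗ[k] B)
        (Coalgebra.comul (R := k) b) = Coalgebra.comul (R := k) b := by
      rw [TensorProduct.map_id]; rfl
    rw [this]
    abel
  rw [← key]
  exact mapPi_mem k B _

lemma comul_mem_G : ∀ n : ℕ, ∀ x ∈ plusPow k B n, Coalgebra.comul (R := k) x ∈ G k B n := by
  intro n
  induction n with
  | zero =>
      intro x _
      have : G k B 0 = ⊤ := by
        rw [eq_top_iff]
        refine le_trans ?_ (le_iSup₂ (f := fun i (_ : i ≤ 0) =>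
          T k B (plusPow k B i) (plusPow k B (0 - i))) 0 le_rfl)
        rw [show plusPow k B 0 = ⊤ from rfl]
        rw [show T k B ⊤ ⊤ = Submodule.map₂ (TensorProduct.mk k B B) ⊤ ⊤ from rfl,
          TensorProduct.map₂_mk_top_top_eq_top]
      rw [this]; trivial
  | succ n ih =>
      intro x hx
      have key : plusPow k B n * I ≤
          Submodule.comap (Coalgebra.comul (R := k) (A := B)) (G k B (n + 1)) := by
        rw [Submodule.mul_le]
        intro a ha b hb
        rw [Submodule.mem_comap, Bialgebra.comul_mul]
        -- comul b decomposes
        have hsplit : Coalgebra.comul (R := k) b ∈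
            T k B (plusPow k B 1) (plusPow k B 1)
            ⊔ T k B (plusPow k B 1) (plusPow k B 0)
            ⊔ T k B (plusPow k B 0) (plusPow k B 1) := by
          have h11 : Coalgebra.comul (R := k) b - b ⊗ₜ[k] (1:B) - (1:B) ⊗ₜ[k] b ∈
              T k B (plusPow k B 1) (plusPow k B 1) := by
            rw [plusPow_one]; exact comul_sub_mem k B b hb
          have h10 : b ⊗ₜ[k] (1:B) ∈ T k B (plusPow k B 1) (plusPow k B 0) := by
            refine Submodule.apply_mem_map₂ _ ?_ ?_
            · rw [plusPow_one]; exact hb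
            · trivial
          have h01 : (1:B) ⊗ₜ[k] b ∈ T k B (plusPow k B 0) (plusPow k B 1) := by
            refine Submodule.apply_mem_map₂ _ ?_ ?_
            · trivial
            · rw [plusPow_one]; exact hb
          have := add_mem (add_mem
            (Submodule.mem_sup_left (Submodule.mem_sup_left h11))
            (Submodule.mem_sup_left (Submodule.mem_sup_right h10)))
            (Submodule.mem_sup_right h01)
          have e : Coalgebra.comul (R := k) b - b ⊗ₜ[k] (1:B) - (1:B) ⊗ₜ[k] b
              + b ⊗ₜ[k] (1:B) + (1:B) ⊗ₜ[k] b = Coalgebra.comul (R := k) b := by abel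
          rw [e] at this; exact this
        have hmul : G k B n *
            (T k B (plusPow k B 1) (plusPow k B 1)
             ⊔ T k B (plusPow k B 1) (plusPow k B 0)
             ⊔ T k B (plusPow k B 0) (plusPow k B 1)) ≤ G k B (n + 1) := by
          rw [Submodule.mul_sup, Submodule.mul_sup]
          have comp : ∀ c d : ℕ, 1 ≤ c + d →
              G k B n * T k B (plusPow k B c) (plusPow k B d) ≤ G k B (n + 1) := by
            intro c d hcd
            show (⨆ (i : ℕ) (_ : i ≤ n), T k B (plusPow k B i) (plusPow k B (n - i)))
              * T k B (plusPow k B c) (plusPow k B d) ≤ G k B (n + 1)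
            rw [Submodule.iSup_mul]
            refine iSup_le fun i => ?_
            rw [Submodule.iSup_mul]
            refine iSup_le fun hi => ?_
            refine le_trans (T_mul_T k B _ _ _ _) ?_
            refine le_trans (Submodule.map₂_le_map₂ (plusPow_mul k B i c)
              (plusPow_mul k B (n - i) d)) ?_
            exact T_le_G k B (by omega)
          exact sup_le (sup_le (comp 1 1 (by omega)) (comp 1 0 (by omega)))
            (comp 0 1 (by omega))
        exact hmul (Submodule.mul_mem_mul (ih a ha) hsplit)
      exact key hx

lemma conv_vanish {P Q : ℕ} {f g : B →ₗ[k] k}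
    (hf : ∀ x ∈ plusPow k B P, f x = 0) (hg : ∀ x ∈ plusPow k B Q, g x = 0)
    {n : ℕ} (hn : P + Q ≤ n + 1) : ∀ x ∈ plusPow k B n, conv k B f g x = 0 := by
  intro x hx
  have hmem := comul_mem_G k B n x hx
  have hker : G k B n ≤ LinearMap.ker
      ((LinearMap.mul' k k ∘ₗ TensorProduct.map f g : B ⊗[k] B →ₗ[k] k)) := by
    refine iSup_le fun i => iSup_le fun hi => ?_
    rw [show T k B (plusPow k B i) (plusPow k B (n - i))
      = Submodule.map₂ (TensorProduct.mk k B B) (plusPow k B i) (plusPow k B (n-i)) from rfl,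
      Submodule.map₂_le]
    intro a ha b hb
    rw [LinearMap.mem_ker]
    have : (LinearMap.mul' k k ∘ₗ TensorProduct.map f g) (a ⊗ₜ[k] b) = f a * g b := by
      simp
    rw [show (TensorProduct.mk k B B) a b = a ⊗ₜ[k] b from rfl, this]
    by_cases hP : P ≤ i
    · rw [hf a (plusPow_antitone k B hP ha), zero_mul]
    · have hQ : Q ≤ n - i := by omega
      rw [hg b (plusPow_antitone k B hQ hb), mul_zero]
  have := LinearMap.mem_ker.1 (hker hmem)
  simpa [conv] using this

lemma fil_mono {M N : ℤ} (hMN : M ≤ N) (hN : -1 ≤ N) {f : B →ₗ[k] k}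
    (hf : InDualFil k B M f) : InDualFil k B N f := by
  rw [InDualFil, if_neg (by omega)]
  by_cases hM : M ≤ -2
  · rw [InDualFil, if_pos hM] at hf
    subst hf; intro x _; simp
  · rw [InDualFil, if_neg hM] at hf
    intro x hx
    exact hf x (plusPow_antitone k B (by omega) hx)

lemma not_le_neg_two {N : ℤ} (h : -1 ≤ N) : ¬ N ≤ -2 := by omega

/-- **Theorem.** For any `p, q ≥ -1` we have `B_p^∨ ⊛ B_q^∨ ⊆ B_{p+q}^∨`; consequently
`B_∞^∨ = ⋃_{N ≥ -1} B_N^∨` is a subalgebra of the convolution algebra `B^∨`: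
it contains the counit `ε` and is closed under addition, scalar multiplication and
convolution. -/
theorem stmt18 :
    (∀ p q : ℤ, -1 ≤ p → -1 ≤ q → ∀ f g : B →ₗ[k] k,
        InDualFil k B p f → InDualFil k B q g → InDualFil k B (p + q) (conv k B f g)) ∧
    InDualInfty k B (Coalgebra.counit (R := k) (A := B)) ∧
    (∀ f g : B →ₗ[k] k, InDualInfty k B f → InDualInfty k B g →
      InDualInfty k B (f + g) ∧ InDualInfty k B (conv k B f g)) ∧
    (∀ (r : k) (f : B →ₗ[k] k), InDualInfty k B f → InDualInfty k B (r • f)) := by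
  have main : ∀ p q : ℤ, -1 ≤ p → -1 ≤ q → ∀ f g : B →ₗ[k] k,
      InDualFil k B p f → InDualFil k B q g → InDualFil k B (p + q) (conv k B f g) := by
    intro p q hp hq f g hf hg
    rw [InDualFil, if_neg (not_le_neg_two hp)] at hf
    rw [InDualFil, if_neg (not_le_neg_two hq)] at hg
    rw [InDualFil]
    by_cases hpq : p + q ≤ -2
    · -- then p = q = -1, so f = 0
      rw [if_pos hpq]
      have hp1 : p = -1 := by omega
      have hf0 : f = 0 := by
        apply LinearMap.ext; intro x
        have := hf x (by rw [hp1]; trivial)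
        simpa using this
      subst hf0
      apply LinearMap.ext; intro x
      simp [conv]
    · rw [if_neg hpq]
      exact conv_vanish k B hf hg (by omega)
  refine ⟨main, ?_, ?_, ?_⟩
  · refine ⟨0, by omega, ?_⟩
    rw [InDualFil, if_neg (by omega)]
    intro x hx
    have : plusPow k B (0 + 1 : ℤ).toNat = plusPow k B 1 := rfl
    rw [this, plusPow_one] at hx
    exact LinearMap.mem_ker.1 hx
  · intro f g ⟨N₁, hN₁, hf⟩ ⟨N₂, hN₂, hg⟩
    rw [InDualFil, if_neg (not_le_neg_two hN₁)] at hf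
    rw [InDualFil, if_neg (not_le_neg_two hN₂)] at hg
    have hm1 : N₁ ≤ max N₁ N₂ := le_max_left _ _
    have hm2 : N₂ ≤ max N₁ N₂ := le_max_right _ _
    constructor
    · refine ⟨max N₁ N₂, by omega, ?_⟩
      rw [InDualFil, if_neg (by omega)]
      intro x hx
      have h1 : x ∈ plusPow k B (N₁ + 1).toNat :=
        plusPow_antitone k B (by omega) hx
      have h2 : x ∈ plusPow k B (N₂ + 1).toNat :=
        plusPow_antitone k B (by omega) hx
      simp [hf x h1, hg x h2]
    · refine ⟨max (N₁ + N₂) (-1), le_max_right _ _, ?_⟩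
      exact fil_mono k B (le_max_left _ _) (le_max_right _ _)
        (main N₁ N₂ hN₁ hN₂ f g
          (by rw [InDualFil, if_neg (not_le_neg_two hN₁)]; exact hf)
          (by rw [InDualFil, if_neg (not_le_neg_two hN₂)]; exact hg))
  · intro r f ⟨N, hN, hf⟩
    rw [InDualFil, if_neg (not_le_neg_two hN)] at hf
    refine ⟨N, hN, ?_⟩
    rw [InDualFil, if_neg (not_le_neg_two hN)]
    intro x hx
    simp [hf x hx]
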